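/- Let G be a graph with vertex set {v_1,...,v_n} and let D_G be its extended double cover (bipartite graph on X ∪ Y with x_i adjacent to y_j iff i = j or v_iv_j ∈ E(G)). Then for every k ≥ 1, G is k-CFCN-choosable (full coloring version) if and only if D_G is k-CFON-choosable (full coloring version). -/

import Mathlib

/-- `G` is `k`-CFON-choosable (full coloring version). -/
def CFONchoosable {V : Type*} (G : SimpleGraph V) (k : ℕ) : Prop :=
  ∀ L : V → Finset ℕ, (∀ v, (L v).card = k) →
    ∃ c : V → ℕ, (∀ v, c v ∈ L v) ∧
      ∀ v : V, ∃ a, ∃! u, G.Adj v u ∧ c u = a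

/-- `G` is `k`-CFCN-choosable (full coloring version). -/
def CFCNchoosable {V : Type*} (G : SimpleGraph V) (k : ℕ) : Prop :=
  ∀ L : V → Finset ℕ, (∀ v, (L v).card = k) →
    ∃ c : V → ℕ, (∀ v, c v ∈ L v) ∧
      ∀ v : V, ∃ a, ∃! u, (G.Adj v u ∨ u = v) ∧ c u = a

/-- The extended double cover of `G`. -/
def extDoubleCover {V : Type*} (G : SimpleGraph V) : SimpleGraph (V ⊕ V) where
  Adj x y := match x, y with
    | Sum.inl i, Sum.inr j => i = j ∨ G.Adj i j
    | Sum.inr j, Sum.inl i => i = j ∨ G.Adj i j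
    | _, _ => False
  symm := ⟨by rintro (i | i) (j | j) h <;> exact h⟩
  loopless := ⟨by rintro (i | i) h <;> exact h⟩

/-!
Write `x_i = inl v_i` and `y_i = inr v_i`. A vertex `x_i` of the extended double cover `D_G` has
exactly the vertices `y_j` with `v_j` in the closed neighbourhood of `v_i` as neighbours, and
symmetrically for `y_i`. So a colouring of `D_G` is conflict-free at every `x_i` (resp. `y_i`) iff
its restriction to `Y` (resp. `X`), read as a colouring of `G`, is a closed-neighbourhood
conflict-free colouring. Hence two CFCN colourings of `G`, one from the lists on `X` and one from
the lists on `Y`, combine into a CFON colouring of `D_G`; conversely, giving `x_i` and `y_i` the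
list of `v_i`, the `Y`-part of a CFON colouring of `D_G` is a CFCN colouring of `G`.
-/

open Sum

theorem existsUnique_sum_iff_inr {α β : Type*} {p : α ⊕ β → Prop} (h : ∀ a, ¬p (inl a)) :
    (∃! u, p u) ↔ ∃! b, p (inr b) := by
  constructor
  · rintro ⟨(a | b), hu, huniq⟩
    · exact absurd hu (h a)
    · exact ⟨b, hu, fun b' hb' => inr_injective (huniq _ hb')⟩
  · rintro ⟨b, hb, huniq⟩
    refine ⟨inr b, hb, ?_⟩
    rintro (a' | b') hu
    · exact absurd hu (h a')
    · rw [huniq b' hu]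

theorem existsUnique_sum_iff_inl {α β : Type*} {p : α ⊕ β → Prop} (h : ∀ b, ¬p (inr b)) :
    (∃! u, p u) ↔ ∃! a, p (inl a) :=
  (Equiv.sumComm α β).existsUnique_congr_left.trans (existsUnique_sum_iff_inr h)

namespace extDoubleCover

variable {V : Type*} (G : SimpleGraph V)

theorem adj_inl_inr {i j : V} : (extDoubleCover G).Adj (inl i) (inr j) ↔ G.Adj i j ∨ j = i := by
  simp only [extDoubleCover, eq_comm, or_comm]

theorem adj_inr_inl {i j : V} : (extDoubleCover G).Adj (inr i) (inl j) ↔ G.Adj i j ∨ j = i := by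
  rw [SimpleGraph.adj_comm, adj_inl_inr, G.adj_comm, eq_comm]

theorem not_adj_inl_inl {i j : V} : ¬(extDoubleCover G).Adj (inl i) (inl j) := id

theorem not_adj_inr_inr {i j : V} : ¬(extDoubleCover G).Adj (inr i) (inr j) := id

theorem existsUnique_adj_inl_iff (c : V ⊕ V → ℕ) (v : V) (a : ℕ) :
    (∃! u, (extDoubleCover G).Adj (inl v) u ∧ c u = a) ↔
      ∃! j, (G.Adj v j ∨ j = v) ∧ c (inr j) = a := by
  rw [existsUnique_sum_iff_inr fun _ h => not_adj_inl_inl G h.1]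
  simp only [adj_inl_inr]

theorem existsUnique_adj_inr_iff (c : V ⊕ V → ℕ) (v : V) (a : ℕ) :
    (∃! u, (extDoubleCover G).Adj (inr v) u ∧ c u = a) ↔
      ∃! j, (G.Adj v j ∨ j = v) ∧ c (inl j) = a := by
  rw [existsUnique_sum_iff_inl fun _ h => not_adj_inr_inr G h.1]
  simp only [adj_inr_inl]

end extDoubleCover

open extDoubleCover in
theorem CFCNchoosable.cfonChoosable_extDoubleCover {V : Type*} {G : SimpleGraph V} {k : ℕ}
    (h : CFCNchoosable G k) : CFONchoosable (extDoubleCover G) k := by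
  intro L hL
  obtain ⟨cX, hcX, hX⟩ := h (L ∘ inl) fun v => hL _
  obtain ⟨cY, hcY, hY⟩ := h (L ∘ inr) fun v => hL _
  refine ⟨Sum.elim cX cY, fun | inl v => hcX v | inr v => hcY v, ?_⟩
  rintro (v | v)
  · simpa only [existsUnique_adj_inl_iff, elim_inr] using hY v
  · simpa only [existsUnique_adj_inr_iff, elim_inl] using hX v

open extDoubleCover in
theorem CFONchoosable.cfcnChoosable_of_extDoubleCover {V : Type*} {G : SimpleGraph V} {k : ℕ}
    (h : CFONchoosable (extDoubleCover G) k) : CFCNchoosable G k := by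
  intro L hL
  obtain ⟨c, hc, hD⟩ := h (fun w => L (w.elim id id)) fun w => hL _
  refine ⟨c ∘ inr, fun v => hc (inr v), fun v => ?_⟩
  simpa only [existsUnique_adj_inl_iff, Function.comp_apply] using hD (inl v)

theorem stmt_12_general {V : Type*} (G : SimpleGraph V) (k : ℕ) :
    CFCNchoosable G k ↔ CFONchoosable (extDoubleCover G) k :=
  ⟨CFCNchoosable.cfonChoosable_extDoubleCover, CFONchoosable.cfcnChoosable_of_extDoubleCover⟩

/-- `G` is `k`-CFCN-choosable iff its extended double cover is
`k`-CFON-choosable (full coloring versions). -/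
theorem stmt_12 {V : Type*} (G : SimpleGraph V) (k : ℕ) (hk : 1 ≤ k) :
    CFCNchoosable G k ↔ CFONchoosable (extDoubleCover G) k :=
  stmt_12_general G k
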